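/- arXiv:1201.6035 — 2 statements merged into one kernel-verified Lean document; each statement's English description precedes it below -/
import Mathlib

section
/- Let A be invertible, b a vector, x = A⁻¹b, and suppose xᵥ = (V + Δ)b where ‖V − A⁻¹‖ ≤ ε₁‖A⁻¹‖ and ‖Δ‖ ≤ ε₂‖V‖. Then ‖xᵥ − x‖ ≤ (ε₁ κ(A) + ε₂(1+ε₁) κ(A)) ‖x‖, where κ(A) = ‖A‖‖A⁻¹‖. -/
open scoped Matrix.Norms.L2Operator
open Matrix

/-- Multiplication of a matrix by a Euclidean vector, as a map on `EuclideanSpace`. -/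
noncomputable def mv {n : ℕ} (A : Matrix (Fin n) (Fin n) ℝ)
    (v : EuclideanSpace ℝ (Fin n)) : EuclideanSpace ℝ (Fin n) :=
  (EuclideanSpace.equiv (Fin n) ℝ).symm (A *ᵥ v)

/-!
The error is `(V + Δ - A⁻¹) b` with `b = A x`. The triangle inequality gives
`‖V‖ ≤ (1 + ε₁) ‖A⁻¹‖`, hence `‖V + Δ - A⁻¹‖ ≤ (ε₁ + ε₂ (1 + ε₁)) ‖A⁻¹‖`, and `‖b‖ ≤ ‖A‖ ‖x‖`
supplies the factor `κ(A) ‖x‖`.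
-/

theorem norm_add_sub_le_of_norm_sub_le {E : Type*} [SeminormedAddCommGroup E]
    {B V Δ : E} {ε₁ ε₂ : ℝ} (hε₂ : 0 ≤ ε₂)
    (hV : ‖V - B‖ ≤ ε₁ * ‖B‖) (hΔ : ‖Δ‖ ≤ ε₂ * ‖V‖) :
    ‖V + Δ - B‖ ≤ (ε₁ + ε₂ * (1 + ε₁)) * ‖B‖ := by
  have hVB : ‖V‖ ≤ (1 + ε₁) * ‖B‖ := by
    have := norm_le_norm_add_norm_sub' V B
    linarith
  calc ‖V + Δ - B‖ = ‖(V - B) + Δ‖ := by rw [add_sub_right_comm]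
    _ ≤ ‖V - B‖ + ‖Δ‖ := norm_add_le _ _
    _ ≤ ε₁ * ‖B‖ + ε₂ * ((1 + ε₁) * ‖B‖) := by gcongr; exact hΔ.trans (by gcongr)
    _ = (ε₁ + ε₂ * (1 + ε₁)) * ‖B‖ := by ring

namespace ContinuousLinearMap

variable {𝕜 E : Type*} [NontriviallyNormedField 𝕜] [SeminormedAddCommGroup E] [NormedSpace 𝕜 E]

theorem norm_apply_le_of_leftInverse {A B : E →L[𝕜] E} (hAB : Function.LeftInverse A B)
    (M : E →L[𝕜] E) (b : E) : ‖M b‖ ≤ ‖M‖ * (‖A‖ * ‖B b‖) := by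
  conv_lhs => rw [← hAB b]
  exact M.le_opNorm_of_le (A.le_opNorm _)

theorem norm_perturbed_apply_sub_le {A B V Δ : E →L[𝕜] E} (hAB : Function.LeftInverse A B)
    {ε₁ ε₂ : ℝ} (hε₂ : 0 ≤ ε₂) (hV : ‖V - B‖ ≤ ε₁ * ‖B‖) (hΔ : ‖Δ‖ ≤ ε₂ * ‖V‖) (b : E) :
    ‖(V + Δ) b - B b‖ ≤ (ε₁ * (‖A‖ * ‖B‖) + ε₂ * (1 + ε₁) * (‖A‖ * ‖B‖)) * ‖B b‖ :=
  calc ‖(V + Δ) b - B b‖ = ‖(V + Δ - B) b‖ := rfl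
    _ ≤ ‖V + Δ - B‖ * (‖A‖ * ‖B b‖) := norm_apply_le_of_leftInverse hAB _ b
    _ ≤ (ε₁ + ε₂ * (1 + ε₁)) * ‖B‖ * (‖A‖ * ‖B b‖) := by
      gcongr; exact norm_add_sub_le_of_norm_sub_le hε₂ hV hΔ
    _ = (ε₁ * (‖A‖ * ‖B‖) + ε₂ * (1 + ε₁) * (‖A‖ * ‖B‖)) * ‖B b‖ := by ring

end ContinuousLinearMap

theorem mv_eq_toEuclideanCLM {n : ℕ} (A : Matrix (Fin n) (Fin n) ℝ) :
    mv A = toEuclideanCLM (𝕜 := ℝ) A := rfl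

theorem stmt3_general {n : ℕ} (A V Δ : Matrix (Fin n) (Fin n) ℝ) (hA : IsUnit A)
    (b : EuclideanSpace ℝ (Fin n)) (ε₁ ε₂ : ℝ) (hε₂ : 0 ≤ ε₂)
    (hV : ‖V - A⁻¹‖ ≤ ε₁ * ‖A⁻¹‖) (hΔ : ‖Δ‖ ≤ ε₂ * ‖V‖) :
    ‖mv (V + Δ) b - mv A⁻¹ b‖ ≤
      (ε₁ * (‖A‖ * ‖A⁻¹‖) + ε₂ * (1 + ε₁) * (‖A‖ * ‖A⁻¹‖)) * ‖mv A⁻¹ b‖ := by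
  set T := toEuclideanCLM (n := Fin n) (𝕜 := ℝ)
  have hinv : Function.LeftInverse (T A) (T A⁻¹) := fun y => by
    simpa [T] using
      congrArg (fun M => T M y) (mul_nonsing_inv A ((isUnit_iff_isUnit_det A).mp hA))
  have hV' : ‖T V - T A⁻¹‖ ≤ ε₁ * ‖T A⁻¹‖ := by rw [← map_sub]; exact hV
  simp only [mv_eq_toEuclideanCLM, map_add]
  exact ContinuousLinearMap.norm_perturbed_apply_sub_le hinv hε₂ hV' hΔ b

theorem stmt3 {n : ℕ} (A V Δ : Matrix (Fin n) (Fin n) ℝ) (hA : IsUnit A)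
    (b : EuclideanSpace ℝ (Fin n)) (ε₁ ε₂ : ℝ) (hε₁ : 0 ≤ ε₁) (hε₂ : 0 ≤ ε₂)
    (hV : ‖V - A⁻¹‖ ≤ ε₁ * ‖A⁻¹‖) (hΔ : ‖Δ‖ ≤ ε₂ * ‖V‖) :
    ‖mv (V + Δ) b - mv A⁻¹ b‖ ≤
      (ε₁ * (‖A‖ * ‖A⁻¹‖) + ε₂ * (1 + ε₁) * (‖A‖ * ‖A⁻¹‖)) * ‖mv A⁻¹ b‖ :=
  stmt3_general A V Δ hA b ε₁ ε₂ hε₂ hV hΔ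
end

section
/- Let A be invertible, x = A⁻¹b, and let xᵥ = (V + Δ)b where ‖VA − I‖ ≤ c₁κ(A)ε and ‖Δ‖ ≤ ε‖V‖ and ‖V‖ ≤ c₂‖A⁻¹‖. Then ‖xᵥ − x‖ ≤ (c₁ + c₂)κ(A)ε‖x‖. -/
/- For an approximate inverse `W`, the error factors through the exact solution:
`W b - A⁻¹ b = (W A - 1) (A⁻¹ b)`, so it is at most `‖W A - 1‖ ‖x‖`. For `W = V + Δ` the residual
is at most `‖V A - 1‖ + ‖Δ‖ ‖A‖ ≤ c₁ κ(A) ε + ε c₂ ‖A⁻¹‖ ‖A‖`. -/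

open scoped Matrix.Norms.L2Operator
open Matrix

section

variable {n : ℕ}

theorem mv_mul (A B : Matrix (Fin n) (Fin n) ℝ) (v : EuclideanSpace ℝ (Fin n)) :
    mv (A * B) v = mv A (mv B v) := by
  simp only [mv, ← mulVec_mulVec]
  rfl

theorem mv_sub (A B : Matrix (Fin n) (Fin n) ℝ) (v : EuclideanSpace ℝ (Fin n)) :
    mv (A - B) v = mv A v - mv B v := by
  simp only [mv, sub_mulVec, map_sub]

theorem sub_nonsing_inv_eq_residual_mul {A : Matrix (Fin n) (Fin n) ℝ} (hA : IsUnit A)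
    (W : Matrix (Fin n) (Fin n) ℝ) : W - A⁻¹ = (W * A - 1) * A⁻¹ := by
  rw [sub_mul, Matrix.mul_assoc, mul_nonsing_inv A ((isUnit_iff_isUnit_det A).mp hA),
    Matrix.mul_one, Matrix.one_mul]

theorem norm_mv_sub_mv_nonsing_inv_le {A : Matrix (Fin n) (Fin n) ℝ} (hA : IsUnit A)
    (W : Matrix (Fin n) (Fin n) ℝ) (b : EuclideanSpace ℝ (Fin n)) :
    ‖mv W b - mv A⁻¹ b‖ ≤ ‖W * A - 1‖ * ‖mv A⁻¹ b‖ := by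
  rw [← mv_sub, sub_nonsing_inv_eq_residual_mul hA, mv_mul]
  exact l2_opNorm_mulVec _ _

theorem norm_add_mul_sub_one_le (V Δ A : Matrix (Fin n) (Fin n) ℝ) :
    ‖(V + Δ) * A - 1‖ ≤ ‖V * A - 1‖ + ‖Δ‖ * ‖A‖ := by
  calc ‖(V + Δ) * A - 1‖ = ‖(V * A - 1) + Δ * A‖ := by rw [add_mul]; abel_nf
    _ ≤ ‖V * A - 1‖ + ‖Δ * A‖ := norm_add_le _ _
    _ ≤ ‖V * A - 1‖ + ‖Δ‖ * ‖A‖ := by gcongr; exact l2_opNorm_mul Δ A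

end

theorem stmt4_general {n : ℕ} (A V Δ : Matrix (Fin n) (Fin n) ℝ) (hA : IsUnit A)
    (b : EuclideanSpace ℝ (Fin n)) (c₁ c₂ ε : ℝ)
    (hε : 0 ≤ ε)
    (hVA : ‖V * A - 1‖ ≤ c₁ * (‖A‖ * ‖A⁻¹‖) * ε)
    (hΔ : ‖Δ‖ ≤ ε * ‖V‖) (hVn : ‖V‖ ≤ c₂ * ‖A⁻¹‖) :
    ‖mv (V + Δ) b - mv A⁻¹ b‖ ≤ (c₁ + c₂) * (‖A‖ * ‖A⁻¹‖) * ε * ‖mv A⁻¹ b‖ := by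
  have hΔA : ‖Δ‖ * ‖A‖ ≤ c₂ * (‖A‖ * ‖A⁻¹‖) * ε :=
    calc ‖Δ‖ * ‖A‖ ≤ ε * (c₂ * ‖A⁻¹‖) * ‖A‖ := by gcongr; exact hΔ.trans (by gcongr)
      _ = c₂ * (‖A‖ * ‖A⁻¹‖) * ε := by ring
  have hres : ‖(V + Δ) * A - 1‖ ≤ (c₁ + c₂) * (‖A‖ * ‖A⁻¹‖) * ε := by
    linarith [norm_add_mul_sub_one_le V Δ A]
  calc ‖mv (V + Δ) b - mv A⁻¹ b‖ ≤ ‖(V + Δ) * A - 1‖ * ‖mv A⁻¹ b‖ :=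
        norm_mv_sub_mv_nonsing_inv_le hA (V + Δ) b
    _ ≤ (c₁ + c₂) * (‖A‖ * ‖A⁻¹‖) * ε * ‖mv A⁻¹ b‖ := by gcongr

theorem stmt4 {n : ℕ} (A V Δ : Matrix (Fin n) (Fin n) ℝ) (hA : IsUnit A)
    (b : EuclideanSpace ℝ (Fin n)) (c₁ c₂ ε : ℝ)
    (hc₁ : 0 ≤ c₁) (hc₂ : 0 ≤ c₂) (hε : 0 ≤ ε)
    (hVA : ‖V * A - 1‖ ≤ c₁ * (‖A‖ * ‖A⁻¹‖) * ε)
    (hΔ : ‖Δ‖ ≤ ε * ‖V‖) (hVn : ‖V‖ ≤ c₂ * ‖A⁻¹‖) :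
    ‖mv (V + Δ) b - mv A⁻¹ b‖ ≤ (c₁ + c₂) * (‖A‖ * ‖A⁻¹‖) * ε * ‖mv A⁻¹ b‖ :=
  stmt4_general A V Δ hA b c₁ c₂ ε hε hVA hΔ hVn
end
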